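/- Let Θ̄ be a symmetric positive semidefinite d×d matrix and S a real d×d matrix such that SΘ̄Sᵀ ≺ I_d. Let ξ be a random vector in ℝ^d whose distribution is sub-Gaussian with parameters (0, Θ̄). Then for every ν ∈ ℝ^d, ln E[exp(νᵀSξ + ½ξᵀSᵀSξ)] ≤ −½ ln Det(I_d − SΘ̄Sᵀ) + ½ νᵀ[SΘ̄Sᵀ(I_d − SΘ̄Sᵀ)⁻¹]ν. -/

import Mathlib

/-!
For every `x`, `exp (½ xᵀx) = (2π)^(-d/2) ∫ exp (hᵀx - ½ hᵀh) dh`. Applying this with `x = Sξ`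
and exchanging the two integrals (Tonelli), the inner integral over `ξ` is the moment generating
function of `ξ` in the direction `Sᵀ(ν + h)`, which the sub-Gaussian hypothesis bounds by
`exp (½ (ν + h)ᵀ SΘ̄Sᵀ (ν + h))`. What remains is a Gaussian integral in `h` with quadratic form
`I - SΘ̄Sᵀ`; completing the square evaluates it to the right-hand side. All integrals are lower
Lebesgue integrals, so the integrability of the left-hand side is a by-product of the bound.
-/

open MeasureTheory Matrix Real

/-- A probability distribution `P` on `ℝ^d` is sub-Gaussian with parameters `(u, Θ)` if
`ln ∫ exp (hᵀ y) dP(y) ≤ hᵀ u + ½ hᵀ Θ h` for all `h`. -/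
def IsSubGaussian {d : ℕ} (P : Measure (Fin d → ℝ)) (u : Fin d → ℝ)
    (Θ : Matrix (Fin d) (Fin d) ℝ) : Prop :=
  ∀ h : Fin d → ℝ, Integrable (fun y => Real.exp (h ⬝ᵥ y)) P ∧
    ∫ y, Real.exp (h ⬝ᵥ y) ∂P ≤ Real.exp (h ⬝ᵥ u + (1/2) * (h ⬝ᵥ (Θ *ᵥ h)))

lemma mul_inv_one_sub_eq_add {ι R : Type*} [Fintype ι] [DecidableEq ι] [CommRing R]
    {Q : Matrix ι ι R} (h : IsUnit (1 - Q).det) :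
    Q * (1 - Q)⁻¹ = Q + Q * (1 - Q)⁻¹ * Q := by
  calc Q * (1 - Q)⁻¹ = Q * (1 - Q)⁻¹ * ((1 - Q) + Q) := by rw [sub_add_cancel, Matrix.mul_one]
    _ = Q + Q * (1 - Q)⁻¹ * Q := by
      rw [Matrix.mul_add, Matrix.mul_assoc Q, nonsing_inv_mul _ h, Matrix.mul_one]

section GaussianIntegral

variable {ι : Type*} [Fintype ι]

lemma exp_mul_sub_half_sq_eq (a t : ℝ) :
    exp (a * t - 2⁻¹ * t ^ 2) = exp (2⁻¹ * a ^ 2) * exp (-2⁻¹ * (t - a) ^ 2) := by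
  rw [← exp_add]; ring_nf

lemma integrable_exp_mul_sub_half_sq (a : ℝ) :
    Integrable fun t : ℝ ↦ exp (a * t - 2⁻¹ * t ^ 2) := by
  simp_rw [exp_mul_sub_half_sq_eq]
  exact ((integrable_exp_neg_mul_sq (by norm_num)).comp_sub_right a).const_mul _

lemma integral_exp_mul_sub_half_sq (a : ℝ) :
    ∫ t : ℝ, exp (a * t - 2⁻¹ * t ^ 2) = √(2 * π) * exp (2⁻¹ * a ^ 2) := by
  simp_rw [exp_mul_sub_half_sq_eq]
  rw [integral_const_mul, integral_sub_right_eq_self (fun t ↦ exp (-2⁻¹ * t ^ 2)) a,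
    integral_gaussian, mul_comm, div_inv_eq_mul, mul_comm π]

lemma exp_dotProduct_sub_half_dotProduct_self_eq_prod (b h : ι → ℝ) :
    exp (b ⬝ᵥ h - 2⁻¹ * (h ⬝ᵥ h)) = ∏ i, exp (b i * h i - 2⁻¹ * h i ^ 2) := by
  rw [← exp_sum]
  simp [dotProduct, Finset.mul_sum, ← Finset.sum_sub_distrib, sq]

lemma lintegral_exp_dotProduct_sub_half_dotProduct_self (b : ι → ℝ) :
    ∫⁻ h : ι → ℝ, ENNReal.ofReal (exp (b ⬝ᵥ h - 2⁻¹ * (h ⬝ᵥ h)))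
      = ENNReal.ofReal (√(2 * π) ^ Fintype.card ι * exp (2⁻¹ * (b ⬝ᵥ b))) := by
  have hint : Integrable fun h : ι → ℝ ↦ ∏ i, exp (b i * h i - 2⁻¹ * h i ^ 2) :=
    .fintype_prod fun i ↦ integrable_exp_mul_sub_half_sq (b i)
  simp_rw [exp_dotProduct_sub_half_dotProduct_self_eq_prod]
  rw [← ofReal_integral_eq_lintegral_ofReal hint (.of_forall fun _ ↦ by positivity),
    integral_fintype_prod_volume_eq_prod (f := fun i t ↦ exp (b i * t - 2⁻¹ * t ^ 2))]
  simp_rw [integral_exp_mul_sub_half_sq]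
  rw [Finset.prod_mul_distrib, Finset.prod_const, ← exp_sum]
  simp [dotProduct, Finset.mul_sum, sq]

lemma lintegral_exp_add_dotProduct_sub_half_dotProduct_self (v x : ι → ℝ) :
    ∫⁻ h : ι → ℝ, ENNReal.ofReal (exp ((v + h) ⬝ᵥ x - 2⁻¹ * (h ⬝ᵥ h)))
      = ENNReal.ofReal (√(2 * π) ^ Fintype.card ι)
        * ENNReal.ofReal (exp (v ⬝ᵥ x + 2⁻¹ * (x ⬝ᵥ x))) := by
  have hsplit (h : ι → ℝ) : ENNReal.ofReal (exp ((v + h) ⬝ᵥ x - 2⁻¹ * (h ⬝ᵥ h)))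
      = ENNReal.ofReal (exp (v ⬝ᵥ x)) * ENNReal.ofReal (exp (x ⬝ᵥ h - 2⁻¹ * (h ⬝ᵥ h))) := by
    rw [← ENNReal.ofReal_mul (exp_pos _).le, ← exp_add, add_dotProduct, dotProduct_comm h x]
    ring_nf
  simp_rw [hsplit]
  rw [lintegral_const_mul' _ _ ENNReal.ofReal_ne_top,
    lintegral_exp_dotProduct_sub_half_dotProduct_self, ← ENNReal.ofReal_mul (exp_pos _).le,
    ← ENNReal.ofReal_mul (by positivity), exp_add]
  congr 1
  ring

open scoped MatrixOrder in
lemma lintegral_exp_neg_half_dotProduct_mulVec [DecidableEq ι] {A : Matrix ι ι ℝ}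
    (hA : A.PosDef) :
    ∫⁻ h : ι → ℝ, ENNReal.ofReal (exp (-(2⁻¹ * (h ⬝ᵥ A *ᵥ h))))
      = ENNReal.ofReal (√(2 * π) ^ Fintype.card ι / √A.det) := by
  have hdet := hA.det_pos
  obtain ⟨B, rfl⟩ := CStarAlgebra.nonneg_iff_eq_star_mul_self.mp hA.posSemidef.nonneg
  have hdetB : (star B * B).det = B.det ^ 2 := by
    simp [star_eq_conjTranspose, sq]
  have hB : B.det ≠ 0 := by
    rintro h0; simp [hdetB, h0] at hdet
  have hform (h : ι → ℝ) : h ⬝ᵥ (star B * B) *ᵥ h = B *ᵥ h ⬝ᵥ B *ᵥ h := by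
    rw [← mulVec_mulVec, dotProduct_mulVec, star_eq_conjTranspose,
      conjTranspose_eq_transpose_of_trivial, vecMul_transpose]
  set g : (ι → ℝ) → ENNReal := fun x ↦ ENNReal.ofReal (exp (-(2⁻¹ * (x ⬝ᵥ x))))
  have hg : Measurable g := by fun_prop
  have hgauss : ∫⁻ x, g x = ENNReal.ofReal (√(2 * π) ^ Fintype.card ι) := by
    simpa using lintegral_exp_dotProduct_sub_half_dotProduct_self (0 : ι → ℝ)
  calc ∫⁻ h : ι → ℝ, ENNReal.ofReal (exp (-(2⁻¹ * (h ⬝ᵥ (star B * B) *ᵥ h))))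
      = ∫⁻ h, g (toLin' B h) := by simp only [hform, toLin'_apply, g]
    _ = ∫⁻ x, g x ∂(Measure.map (toLin' B) volume) :=
        (lintegral_map hg (toLin' B).continuous_of_finiteDimensional.measurable).symm
    _ = ENNReal.ofReal |B.det⁻¹| * ENNReal.ofReal (√(2 * π) ^ Fintype.card ι) := by
        rw [Real.map_matrix_volume_pi_eq_smul_volume_pi hB, lintegral_smul_measure, smul_eq_mul,
          hgauss]
    _ = _ := by
        rw [← ENNReal.ofReal_mul (abs_nonneg _), hdetB, sqrt_sq_eq_abs, abs_inv, div_eq_mul_inv,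
          mul_comm]

lemma lintegral_exp_dotProduct_sub_half_dotProduct_mulVec [DecidableEq ι] {A : Matrix ι ι ℝ}
    (hA : A.PosDef) (b : ι → ℝ) :
    ∫⁻ h : ι → ℝ, ENNReal.ofReal (exp (b ⬝ᵥ h - 2⁻¹ * (h ⬝ᵥ A *ᵥ h)))
      = ENNReal.ofReal (√(2 * π) ^ Fintype.card ι / √A.det * exp (2⁻¹ * (b ⬝ᵥ A⁻¹ *ᵥ b))) := by
  set c := A⁻¹ *ᵥ b
  have hAc : A *ᵥ c = b := by
    rw [mulVec_mulVec, mul_nonsing_inv _ (isUnit_iff_ne_zero.mpr hA.det_pos.ne'), one_mulVec]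
  have hsymm (x : ι → ℝ) : x ᵥ* A = A *ᵥ x := by
    rw [← mulVec_transpose, (isHermitian_iff_isSymm.mp hA.isHermitian).eq]
  have hsquare (h : ι → ℝ) : b ⬝ᵥ (h + c) - 2⁻¹ * ((h + c) ⬝ᵥ A *ᵥ (h + c))
      = 2⁻¹ * (b ⬝ᵥ c) + -(2⁻¹ * (h ⬝ᵥ A *ᵥ h)) := by
    simp only [mulVec_add, dotProduct_add, add_dotProduct, dotProduct_mulVec _ A, hsymm, hAc]
    rw [dotProduct_comm c b, dotProduct_comm h b]
    ring
  calc ∫⁻ h : ι → ℝ, ENNReal.ofReal (exp (b ⬝ᵥ h - 2⁻¹ * (h ⬝ᵥ A *ᵥ h)))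
      = ∫⁻ h : ι → ℝ, ENNReal.ofReal (exp (b ⬝ᵥ (h + c) - 2⁻¹ * ((h + c) ⬝ᵥ A *ᵥ (h + c)))) :=
        (lintegral_add_right_eq_self
          (fun h ↦ ENNReal.ofReal (exp (b ⬝ᵥ h - 2⁻¹ * (h ⬝ᵥ A *ᵥ h)))) c).symm
    _ = ENNReal.ofReal (exp (2⁻¹ * (b ⬝ᵥ c)))
          * ∫⁻ h : ι → ℝ, ENNReal.ofReal (exp (-(2⁻¹ * (h ⬝ᵥ A *ᵥ h)))) := by
        simp_rw [hsquare, exp_add, ENNReal.ofReal_mul (exp_pos _).le]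
        exact lintegral_const_mul' _ _ ENNReal.ofReal_ne_top
    _ = _ := by
        rw [lintegral_exp_neg_half_dotProduct_mulVec hA, ← ENNReal.ofReal_mul (exp_pos _).le,
          mul_comm]

lemma lintegral_exp_half_dotProduct_mulVec_add_sub_half_dotProduct_self [DecidableEq ι]
    {Q : Matrix ι ι ℝ} (hQ : (1 - Q).PosDef) (v : ι → ℝ) :
    ∫⁻ h : ι → ℝ, ENNReal.ofReal (exp (2⁻¹ * ((v + h) ⬝ᵥ Q *ᵥ (v + h)) - 2⁻¹ * (h ⬝ᵥ h)))
      = ENNReal.ofReal (√(2 * π) ^ Fintype.card ι) *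
        ENNReal.ofReal (exp (-2⁻¹ * log (1 - Q).det + 2⁻¹ * (v ⬝ᵥ (Q * (1 - Q)⁻¹) *ᵥ v))) := by
  have hdet := hQ.det_pos
  have hsymm (x : ι → ℝ) : x ᵥ* Q = Q *ᵥ x := by
    have h1 := (isHermitian_iff_isSymm.mp hQ.isHermitian).eq
    rw [transpose_sub, transpose_one, sub_right_inj] at h1
    rw [← mulVec_transpose, h1]
  have hexpand (h : ι → ℝ) : 2⁻¹ * ((v + h) ⬝ᵥ Q *ᵥ (v + h)) - 2⁻¹ * (h ⬝ᵥ h)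
      = 2⁻¹ * (v ⬝ᵥ Q *ᵥ v) + (Q *ᵥ v ⬝ᵥ h - 2⁻¹ * (h ⬝ᵥ (1 - Q) *ᵥ h)) := by
    simp only [mulVec_add, dotProduct_add, add_dotProduct, sub_mulVec, one_mulVec, dotProduct_sub,
      dotProduct_mulVec v Q h, hsymm]
    rw [dotProduct_comm h (Q *ᵥ v)]
    ring
  have hquad : v ⬝ᵥ (Q * (1 - Q)⁻¹) *ᵥ v = v ⬝ᵥ Q *ᵥ v + Q *ᵥ v ⬝ᵥ (1 - Q)⁻¹ *ᵥ Q *ᵥ v := by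
    rw [mul_inv_one_sub_eq_add (isUnit_iff_ne_zero.mpr hdet.ne'), add_mulVec, dotProduct_add,
      ← mulVec_mulVec, ← mulVec_mulVec, dotProduct_mulVec v Q ((1 - Q)⁻¹ *ᵥ Q *ᵥ v), hsymm]
  have hlogdet : exp (-2⁻¹ * log (1 - Q).det) = (√(1 - Q).det)⁻¹ := by
    rw [sqrt_eq_rpow, ← rpow_neg hdet.le, rpow_def_of_pos hdet]
    ring_nf
  have hsplit (h : ι → ℝ) :
      ENNReal.ofReal (exp (2⁻¹ * ((v + h) ⬝ᵥ Q *ᵥ (v + h)) - 2⁻¹ * (h ⬝ᵥ h)))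
        = ENNReal.ofReal (exp (2⁻¹ * (v ⬝ᵥ Q *ᵥ v)))
          * ENNReal.ofReal (exp (Q *ᵥ v ⬝ᵥ h - 2⁻¹ * (h ⬝ᵥ (1 - Q) *ᵥ h))) := by
    rw [hexpand, exp_add, ENNReal.ofReal_mul (exp_pos _).le]
  simp_rw [hsplit]
  rw [lintegral_const_mul' _ _ ENNReal.ofReal_ne_top,
    lintegral_exp_dotProduct_sub_half_dotProduct_mulVec hQ, ← ENNReal.ofReal_mul (by positivity),
    ← ENNReal.ofReal_mul (by positivity), hquad, mul_add, exp_add, exp_add, hlogdet]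
  congr 1
  ring

end GaussianIntegral

lemma integrable_and_integral_le_of_lintegral_le {α : Type*} [MeasurableSpace α] {μ : Measure α}
    {f : α → ℝ} {c : ℝ} (hf : AEStronglyMeasurable f μ) (hf0 : 0 ≤ᵐ[μ] f) (hc : 0 ≤ c)
    (h : ∫⁻ x, ENNReal.ofReal (f x) ∂μ ≤ ENNReal.ofReal c) :
    Integrable f μ ∧ ∫ x, f x ∂μ ≤ c :=
  ⟨⟨hf, (hasFiniteIntegral_iff_ofReal hf0).mpr (h.trans_lt ENNReal.ofReal_lt_top)⟩,
    integral_eq_lintegral_of_nonneg_ae hf0 hf ▸ ENNReal.toReal_le_of_le_ofReal hc h⟩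

namespace IsSubGaussian

variable {d : ℕ} {P : Measure (Fin d → ℝ)} {u : Fin d → ℝ} {Θ : Matrix (Fin d) (Fin d) ℝ}

lemma lintegral_exp_dotProduct_le (hP : IsSubGaussian P u Θ) (h : Fin d → ℝ) :
    ∫⁻ y, ENNReal.ofReal (exp (h ⬝ᵥ y)) ∂P
      ≤ ENNReal.ofReal (exp (h ⬝ᵥ u + 1 / 2 * (h ⬝ᵥ Θ *ᵥ h))) := by
  rw [← ofReal_integral_eq_lintegral_ofReal (hP h).1 (.of_forall fun _ ↦ (exp_pos _).le)]
  exact ENNReal.ofReal_le_ofReal (hP h).2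

lemma map_mulVec {m : ℕ} (hP : IsSubGaussian P u Θ) (S : Matrix (Fin m) (Fin d) ℝ) :
    IsSubGaussian (P.map (S *ᵥ ·)) (S *ᵥ u) (S * Θ * Sᵀ) := by
  intro h
  have hS : Measurable (S *ᵥ · : (Fin d → ℝ) → Fin m → ℝ) := by fun_prop
  have hexp : Continuous fun y : Fin m → ℝ ↦ exp (h ⬝ᵥ y) := by fun_prop
  have hdual (y : Fin d → ℝ) : h ⬝ᵥ S *ᵥ y = Sᵀ *ᵥ h ⬝ᵥ y := by
    rw [dotProduct_mulVec, mulVec_transpose]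
  have hquad : h ⬝ᵥ (S * Θ * Sᵀ) *ᵥ h = Sᵀ *ᵥ h ⬝ᵥ Θ *ᵥ Sᵀ *ᵥ h := by
    rw [← mulVec_mulVec, ← mulVec_mulVec, hdual]
  rw [integrable_map_measure hexp.aestronglyMeasurable hS.aemeasurable,
    integral_map hS.aemeasurable hexp.aestronglyMeasurable]
  simpa only [Function.comp_def, hdual, hquad] using hP (Sᵀ *ᵥ h)

lemma lintegral_exp_dotProduct_add_half_dotProduct_self_le [SFinite P]
    (hP : IsSubGaussian P 0 Θ) (hΘ : (1 - Θ).PosDef) (v : Fin d → ℝ) :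
    ∫⁻ x, ENNReal.ofReal (exp (v ⬝ᵥ x + 1 / 2 * (x ⬝ᵥ x))) ∂P ≤
      ENNReal.ofReal (exp (-(1 / 2) * log (1 - Θ).det + 1 / 2 * (v ⬝ᵥ (Θ * (1 - Θ)⁻¹) *ᵥ v))) := by
  simp only [one_div]
  set c := ENNReal.ofReal (√(2 * π) ^ d)
  have hc : c ≠ 0 := (ENNReal.ofReal_pos.mpr (by positivity)).ne'
  have hsub (h : Fin d → ℝ) : ∫⁻ x, ENNReal.ofReal (exp ((v + h) ⬝ᵥ x - 2⁻¹ * (h ⬝ᵥ h))) ∂P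
      ≤ ENNReal.ofReal (exp (2⁻¹ * ((v + h) ⬝ᵥ Θ *ᵥ (v + h)) - 2⁻¹ * (h ⬝ᵥ h))) := by
    simp_rw [sub_eq_add_neg, exp_add, ENNReal.ofReal_mul (exp_pos _).le]
    rw [lintegral_mul_const' _ _ ENNReal.ofReal_ne_top]
    gcongr
    simpa only [dotProduct_zero, zero_add, one_div] using hP.lintegral_exp_dotProduct_le (v + h)
  have hmeas : AEMeasurable (Function.uncurry fun x h ↦
      ENNReal.ofReal (exp ((v + h) ⬝ᵥ x - 2⁻¹ * (h ⬝ᵥ h)))) (P.prod volume) := by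
    fun_prop
  rw [← ENNReal.mul_le_mul_iff_right hc ENNReal.ofReal_ne_top]
  calc c * ∫⁻ x, ENNReal.ofReal (exp (v ⬝ᵥ x + 2⁻¹ * (x ⬝ᵥ x))) ∂P
      = ∫⁻ x, (∫⁻ h : Fin d → ℝ, ENNReal.ofReal (exp ((v + h) ⬝ᵥ x - 2⁻¹ * (h ⬝ᵥ h)))) ∂P := by
        rw [← lintegral_const_mul' _ _ ENNReal.ofReal_ne_top]
        simp_rw [lintegral_exp_add_dotProduct_sub_half_dotProduct_self, Fintype.card_fin]
    _ = ∫⁻ h : Fin d → ℝ, (∫⁻ x, ENNReal.ofReal (exp ((v + h) ⬝ᵥ x - 2⁻¹ * (h ⬝ᵥ h))) ∂P) :=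
        lintegral_lintegral_swap hmeas
    _ ≤ ∫⁻ h : Fin d → ℝ,
          ENNReal.ofReal (exp (2⁻¹ * ((v + h) ⬝ᵥ Θ *ᵥ (v + h)) - 2⁻¹ * (h ⬝ᵥ h))) :=
        lintegral_mono hsub
    _ = _ := by
        rw [lintegral_exp_half_dotProduct_mulVec_add_sub_half_dotProduct_self hΘ, Fintype.card_fin]

end IsSubGaussian

theorem stmt15_general {d : ℕ} (Θb : Matrix (Fin d) (Fin d) ℝ)
    (S : Matrix (Fin d) (Fin d) ℝ) (hS : (1 - S * Θb * Sᵀ).PosDef)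
    (P : Measure (Fin d → ℝ)) [IsProbabilityMeasure P] (hP : IsSubGaussian P 0 Θb)
    (v : Fin d → ℝ) :
    Integrable (fun ξ => Real.exp (v ⬝ᵥ (S *ᵥ ξ) + (1/2) * ((S *ᵥ ξ) ⬝ᵥ (S *ᵥ ξ)))) P ∧
    ∫ ξ, Real.exp (v ⬝ᵥ (S *ᵥ ξ) + (1/2) * ((S *ᵥ ξ) ⬝ᵥ (S *ᵥ ξ))) ∂P ≤
      Real.exp (-(1/2) * Real.log ((1 - S * Θb * Sᵀ).det)
        + (1/2) * (v ⬝ᵥ ((S * Θb * Sᵀ * (1 - S * Θb * Sᵀ)⁻¹) *ᵥ v))) := by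
  have hSmeas : Measurable (S *ᵥ · : (Fin d → ℝ) → Fin d → ℝ) := by fun_prop
  have hSP : IsSubGaussian (P.map (S *ᵥ ·)) 0 (S * Θb * Sᵀ) := by
    simpa only [mulVec_zero] using hP.map_mulVec S
  have hbound := hSP.lintegral_exp_dotProduct_add_half_dotProduct_self_le hS v
  rw [lintegral_map (by fun_prop) hSmeas] at hbound
  exact integrable_and_integral_le_of_lintegral_le (by fun_prop)
    (.of_forall fun _ ↦ (exp_pos _).le) (exp_pos _).le hbound

theorem stmt15 {d : ℕ} (Θb : Matrix (Fin d) (Fin d) ℝ) (hΘb : Θb.PosSemidef)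
    (S : Matrix (Fin d) (Fin d) ℝ) (hS : (1 - S * Θb * Sᵀ).PosDef)
    (P : Measure (Fin d → ℝ)) [IsProbabilityMeasure P] (hP : IsSubGaussian P 0 Θb)
    (v : Fin d → ℝ) :
    Integrable (fun ξ => Real.exp (v ⬝ᵥ (S *ᵥ ξ) + (1/2) * ((S *ᵥ ξ) ⬝ᵥ (S *ᵥ ξ)))) P ∧
    ∫ ξ, Real.exp (v ⬝ᵥ (S *ᵥ ξ) + (1/2) * ((S *ᵥ ξ) ⬝ᵥ (S *ᵥ ξ))) ∂P ≤
      Real.exp (-(1/2) * Real.log ((1 - S * Θb * Sᵀ).det)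
        + (1/2) * (v ⬝ᵥ ((S * Θb * Sᵀ * (1 - S * Θb * Sᵀ)⁻¹) *ᵥ v))) :=
  stmt15_general Θb S hS P hP v
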